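/- For h > 0, let ξ⁻ < ξ⁺ be as in the set-up and let Θ(h) = (1/π)∫_{ξ⁻}^{ξ⁺} dx / sqrt((h+1+x)² - e^{2x}). Writing (h+1+x)² - e^{2x} = e^{2x}(U(x)² - 1) ≤ e^{2x}(e^{2h} - 1) on [ξ⁻, ξ⁺], one has Θ(h) ≥ (1/π)(e^{-ξ⁻} - e^{-ξ⁺}) / sqrt(e^{2h} - 1). -/

import Mathlib

open Real Set MeasureTheory

lemma hasDerivAt_p (h x : ℝ) : HasDerivAt (fun x => h + 1 + x - Real.exp x) (1 - Real.exp x) x := by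
  simpa [Pi.sub_def] using ((hasDerivAt_id x).const_add (h+1)).sub (Real.hasDerivAt_exp x)

lemma p_pos (h a b : ℝ) (ha0 : a < 0) (hb0 : 0 < b)
    (ha : Real.exp a - a - 1 = h) (hb : Real.exp b - b - 1 = h) :
    ∀ x ∈ Ioo a b, 0 < h + 1 + x - Real.exp x := by
  intro x hx
  have hpa : h + 1 + a - Real.exp a = 0 := by linarith
  have hpb : h + 1 + b - Real.exp b = 0 := by linarith
  rcases le_or_gt x 0 with hx0 | hx0
  · have hmono : StrictMonoOn (fun x => h + 1 + x - Real.exp x) (Icc a 0) := by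
      apply strictMonoOn_of_deriv_pos (convex_Icc a 0) (by fun_prop)
      intro y hy
      rw [interior_Icc] at hy
      rw [(hasDerivAt_p h y).deriv]
      have : Real.exp y < 1 := by
        rw [← Real.exp_zero]; exact Real.exp_lt_exp.2 hy.2
      linarith
    have := hmono ⟨le_refl a, ha0.le⟩ ⟨hx.1.le, hx0⟩ hx.1
    simpa [hpa] using this
  · have hmono : StrictAntiOn (fun x => h + 1 + x - Real.exp x) (Icc 0 b) := by
      apply strictAntiOn_of_deriv_neg (convex_Icc 0 b) (by fun_prop)
      intro y hy
      rw [interior_Icc] at hy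
      rw [(hasDerivAt_p h y).deriv]
      have : 1 < Real.exp y := by
        rw [← Real.exp_zero]; exact Real.exp_lt_exp.2 hy.1
      linarith
    have := hmono ⟨hx0.le, hx.2.le⟩ ⟨hb0.le, le_refl b⟩ hx.2
    simpa [hpb] using this

lemma p_lower_a (h a c : ℝ) (hac : a < c) (ha : Real.exp a - a - 1 = h) :
    ∀ x ∈ Icc a c, (1 - Real.exp c) * (x - a) ≤ h + 1 + x - Real.exp x := by
  intro x hx
  set r : ℝ → ℝ := fun x => h + 1 + x - Real.exp x - (1 - Real.exp c) * (x - a) with hr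
  have hra : r a = 0 := by simp [hr]; linarith
  have hmono : MonotoneOn r (Icc a c) := by
    apply monotoneOn_of_deriv_nonneg (convex_Icc a c) (by fun_prop) (by fun_prop)
    intro y hy
    rw [interior_Icc] at hy
    have hd : HasDerivAt r ((1 - Real.exp y) - (1 - Real.exp c)) y := by
      have h2 : HasDerivAt (fun x : ℝ => (1 - Real.exp c) * (x - a)) (1 - Real.exp c) y := by
        simpa using (((hasDerivAt_id y).sub_const a).const_mul (1 - Real.exp c))
      exact (hasDerivAt_p h y).sub h2
    rw [hd.deriv]
    have : Real.exp y ≤ Real.exp c := Real.exp_le_exp.2 hy.2.le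
    linarith
  have := hmono ⟨le_refl a, hac.le⟩ hx hx.1
  rw [hra] at this
  simpa [hr] using this

lemma p_lower_b (h b c : ℝ) (hcb : c < b) (hb : Real.exp b - b - 1 = h) :
    ∀ x ∈ Icc c b, (Real.exp c - 1) * (b - x) ≤ h + 1 + x - Real.exp x := by
  intro x hx
  set r : ℝ → ℝ := fun x => h + 1 + x - Real.exp x - (Real.exp c - 1) * (b - x) with hr
  have hrb : r b = 0 := by simp [hr]; linarith
  have hmono : AntitoneOn r (Icc c b) := by
    apply antitoneOn_of_deriv_nonpos (convex_Icc c b) (by fun_prop) (by fun_prop)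
    intro y hy
    rw [interior_Icc] at hy
    have hd : HasDerivAt r ((1 - Real.exp y) - (Real.exp c - 1) * (-1)) y := by
      have h2 : HasDerivAt (fun x : ℝ => (Real.exp c - 1) * (b - x)) ((Real.exp c - 1) * (-1)) y := by
        simpa using (((hasDerivAt_id y).const_sub b).const_mul (Real.exp c - 1))
      exact (hasDerivAt_p h y).sub h2
    rw [hd.deriv]
    have : Real.exp c ≤ Real.exp y := Real.exp_le_exp.2 hy.1.le
    linarith
  have := hmono hx ⟨hcb.le, le_refl b⟩ hx.2
  rw [hrb] at this
  simpa [hr] using this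

lemma F_factor (h x : ℝ) :
    (h + 1 + x) ^ 2 - Real.exp (2 * x)
      = (h + 1 + x - Real.exp x) * (h + 1 + x + Real.exp x) := by
  rw [two_mul, Real.exp_add]; ring

lemma f_meas (h : ℝ) :
    Measurable (fun x => 1 / Real.sqrt ((h + 1 + x) ^ 2 - Real.exp (2 * x))) := by
  apply Measurable.div measurable_const
  exact Real.continuous_sqrt.measurable.comp (by fun_prop)

-- integrability near a
lemma int_near_a (h a : ℝ) (ha0 : a < 0) (ha : Real.exp a - a - 1 = h) :
    IntervalIntegrable (fun x => 1 / Real.sqrt ((h + 1 + x) ^ 2 - Real.exp (2 * x)))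
      volume a (a / 2) := by
  have hac : a < a / 2 := by linarith
  set K : ℝ := Real.exp a * (1 - Real.exp (a / 2)) with hK
  have hKpos : 0 < K := by
    apply mul_pos (Real.exp_pos a)
    have : Real.exp (a / 2) < 1 := by
      rw [← Real.exp_zero]; exact Real.exp_lt_exp.2 (by linarith)
    linarith
  have hbnd : IntervalIntegrable
      (fun x => (Real.sqrt K)⁻¹ * (x - a) ^ (-(1/2) : ℝ)) volume a (a / 2) := by
    have := (intervalIntegral.intervalIntegrable_rpow' (r := -(1/2)) (by norm_num)
      (a := 0) (b := a / 2 - a)).comp_sub_right a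
    simpa using this.const_mul (Real.sqrt K)⁻¹
  apply hbnd.mono_fun' ((f_meas h).aestronglyMeasurable)
  rw [Filter.EventuallyLE, ae_restrict_iff' measurableSet_uIoc]
  apply Filter.Eventually.of_forall
  intro x hx
  rw [uIoc_of_le hac.le] at hx
  have hxa : 0 < x - a := by linarith [hx.1]
  have hple := p_lower_a h a (a/2) hac ha x ⟨hx.1.le, hx.2⟩
  have hq : Real.exp a ≤ h + 1 + x + Real.exp x := by
    have := (Real.exp_pos x).le
    nlinarith [hx.1.le]
  have hFlow : K * (x - a) ≤ (h + 1 + x) ^ 2 - Real.exp (2 * x) := by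
    rw [F_factor]
    have h1 : (0:ℝ) ≤ (1 - Real.exp (a / 2)) * (x - a) := by
      nlinarith [Real.exp_lt_exp.2 (show a/2 < 0 by linarith), Real.exp_zero]
    calc K * (x - a) = (1 - Real.exp (a / 2)) * (x - a) * Real.exp a := by rw [hK]; ring
    _ ≤ (h + 1 + x - Real.exp x) * (h + 1 + x + Real.exp x) :=
        mul_le_mul hple hq (Real.exp_pos a).le (le_trans h1 hple)
  have hKx : 0 < K * (x - a) := mul_pos hKpos hxa
  have hstep : 1 / Real.sqrt ((h + 1 + x) ^ 2 - Real.exp (2 * x))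
      ≤ 1 / Real.sqrt (K * (x - a)) := by
    apply one_div_le_one_div_of_le (Real.sqrt_pos.2 hKx)
    exact Real.sqrt_le_sqrt hFlow
  have hnorm : ‖1 / Real.sqrt ((h + 1 + x) ^ 2 - Real.exp (2 * x))‖
      = 1 / Real.sqrt ((h + 1 + x) ^ 2 - Real.exp (2 * x)) := by
    rw [Real.norm_eq_abs, abs_of_nonneg]
    positivity
  rw [hnorm]
  refine hstep.trans (le_of_eq ?_)
  rw [Real.sqrt_mul hKpos.le, Real.rpow_neg hxa.le, ← Real.sqrt_eq_rpow]
  field_simp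

lemma int_near_b (h a b : ℝ) (ha0 : a < 0) (hb0 : 0 < b)
    (ha : Real.exp a - a - 1 = h) (hb : Real.exp b - b - 1 = h) :
    IntervalIntegrable (fun x => 1 / Real.sqrt ((h + 1 + x) ^ 2 - Real.exp (2 * x)))
      volume (b / 2) b := by
  have hcb : b / 2 < b := by linarith
  set K : ℝ := Real.exp a * (Real.exp (b / 2) - 1) with hK
  have hKpos : 0 < K := by
    apply mul_pos (Real.exp_pos a)
    have : 1 < Real.exp (b / 2) := by
      rw [← Real.exp_zero]; exact Real.exp_lt_exp.2 (by linarith)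
    linarith
  have hbnd : IntervalIntegrable
      (fun x => (Real.sqrt K)⁻¹ * (b - x) ^ (-(1/2) : ℝ)) volume (b / 2) b := by
    have h0 := (intervalIntegral.intervalIntegrable_rpow' (r := -(1/2)) (by norm_num)
      (a := 0) (b := b - b / 2)).comp_sub_left b
    have h1 : IntervalIntegrable (fun x => (b - x) ^ (-(1/2) : ℝ)) volume (b / 2) b := by
      have h1 := h0.symm
      rw [show b - 0 = b by ring, show b - (b - b / 2) = b / 2 by ring] at h1
      exact h1
    simpa using h1.const_mul (Real.sqrt K)⁻¹
  apply hbnd.mono_fun' ((f_meas h).aestronglyMeasurable)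
  rw [Filter.EventuallyLE, ae_restrict_iff' measurableSet_uIoc]
  apply Filter.Eventually.of_forall
  intro x hx
  rw [uIoc_of_le hcb.le] at hx
  rcases lt_or_ge x b with hxb | hxb
  case inr =>
    have hxeq : x = b := le_antisymm hx.2 hxb
    have hFb : (h + 1 + x) ^ 2 - Real.exp (2 * x) = 0 := by
      rw [hxeq, F_factor]
      have : h + 1 + b - Real.exp b = 0 := by linarith
      rw [this]; ring
    rw [hFb]
    simp only [Real.sqrt_zero, div_zero, norm_zero]
    apply mul_nonneg (by positivity)
    exact Real.rpow_nonneg (by linarith) _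
  case inl =>
  have hxb' : 0 < b - x := by linarith
  have hple := p_lower_b h b (b/2) hcb hb x ⟨hx.1.le, hx.2⟩
  have hxa : a < x := by linarith [hx.1]
  have hq : Real.exp a ≤ h + 1 + x + Real.exp x := by
    have := (Real.exp_pos x).le
    nlinarith
  have hFlow : K * (b - x) ≤ (h + 1 + x) ^ 2 - Real.exp (2 * x) := by
    rw [F_factor]
    have h1 : (0:ℝ) ≤ (Real.exp (b / 2) - 1) * (b - x) := by
      nlinarith [Real.exp_lt_exp.2 (show (0:ℝ) < b/2 by linarith), Real.exp_zero]
    calc K * (b - x) = (Real.exp (b / 2) - 1) * (b - x) * Real.exp a := by rw [hK]; ring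
    _ ≤ (h + 1 + x - Real.exp x) * (h + 1 + x + Real.exp x) :=
        mul_le_mul hple hq (Real.exp_pos a).le (le_trans h1 hple)
  have hKx : 0 < K * (b - x) := mul_pos hKpos hxb'
  have hstep : 1 / Real.sqrt ((h + 1 + x) ^ 2 - Real.exp (2 * x))
      ≤ 1 / Real.sqrt (K * (b - x)) := by
    apply one_div_le_one_div_of_le (Real.sqrt_pos.2 hKx)
    exact Real.sqrt_le_sqrt hFlow
  have hnorm : ‖1 / Real.sqrt ((h + 1 + x) ^ 2 - Real.exp (2 * x))‖
      = 1 / Real.sqrt ((h + 1 + x) ^ 2 - Real.exp (2 * x)) := by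
    rw [Real.norm_eq_abs, abs_of_nonneg]
    positivity
  rw [hnorm]
  refine hstep.trans (le_of_eq ?_)
  rw [Real.sqrt_mul hKpos.le, Real.rpow_neg hxb'.le, ← Real.sqrt_eq_rpow]
  field_simp

lemma int_middle (h a b : ℝ) (ha0 : a < 0) (hb0 : 0 < b)
    (ha : Real.exp a - a - 1 = h) (hb : Real.exp b - b - 1 = h) :
    IntervalIntegrable (fun x => 1 / Real.sqrt ((h + 1 + x) ^ 2 - Real.exp (2 * x)))
      volume (a / 2) (b / 2) := by
  apply ContinuousOn.intervalIntegrable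
  have hsub : Set.uIcc (a/2) (b/2) ⊆ Set.Ioo a b := by
    rw [Set.uIcc_of_le (by linarith)]
    intro y hy
    exact ⟨by linarith [hy.1], by linarith [hy.2]⟩
  apply ContinuousOn.div continuousOn_const
  · exact (Real.continuous_sqrt.comp (by fun_prop)).continuousOn
  · intro x hx
    have hx' := hsub hx
    have hp := p_pos h a b ha0 hb0 ha hb x hx'
    have hq : 0 < h + 1 + x + Real.exp x := by
      have := Real.exp_pos x; linarith
    have hF : 0 < (h + 1 + x) ^ 2 - Real.exp (2 * x) := by
      rw [F_factor]; exact mul_pos hp hq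
    exact ne_of_gt (Real.sqrt_pos.2 hF)

lemma f_intble (h a b : ℝ) (ha0 : a < 0) (hb0 : 0 < b)
    (ha : Real.exp a - a - 1 = h) (hb : Real.exp b - b - 1 = h) :
    IntervalIntegrable (fun x => 1 / Real.sqrt ((h + 1 + x) ^ 2 - Real.exp (2 * x)))
      volume a b :=
  ((int_near_a h a ha0 ha).trans (int_middle h a b ha0 hb0 ha hb)).trans
    (int_near_b h a b ha0 hb0 ha hb)

theorem theta_lower_bound (h a b : ℝ) (hh : 0 < h)
    (ha0 : a < 0) (hb0 : 0 < b)
    (ha : Real.exp a - a - 1 = h) (hb : Real.exp b - b - 1 = h) :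
    (Real.exp (-a) - Real.exp (-b)) / (Real.pi * Real.sqrt (Real.exp (2 * h) - 1)) ≤
      (1 / Real.pi) * ∫ x in a..b, 1 / Real.sqrt ((h + 1 + x) ^ 2 - Real.exp (2 * x)) := by
  have hab : a ≤ b := by linarith
  have hE : 0 < Real.exp (2 * h) - 1 := by
    have : (1:ℝ) < Real.exp (2 * h) := by
      rw [← Real.exp_zero]; exact Real.exp_lt_exp.2 (by linarith)
    linarith
  have hsE : 0 < Real.sqrt (Real.exp (2 * h) - 1) := Real.sqrt_pos.2 hE
  set g : ℝ → ℝ := fun x => Real.exp (-x) * (Real.sqrt (Real.exp (2 * h) - 1))⁻¹ with hg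
  set f : ℝ → ℝ := fun x => 1 / Real.sqrt ((h + 1 + x) ^ 2 - Real.exp (2 * x)) with hf
  have hg_int : IntervalIntegrable g volume a b := by
    apply Continuous.intervalIntegrable; fun_prop
  have hf_int : IntervalIntegrable f volume a b := f_intble h a b ha0 hb0 ha hb
  have hgval : ∫ x in a..b, g x
      = (Real.exp (-a) - Real.exp (-b)) * (Real.sqrt (Real.exp (2 * h) - 1))⁻¹ := by
    rw [hg, intervalIntegral.integral_mul_const]
    congr 1
    have := intervalIntegral.integral_comp_neg (a := a) (b := b) (fun x => Real.exp x)
    rw [this, integral_exp]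
  have key : ∫ x in a..b, g x ≤ ∫ x in a..b, f x := by
    rw [intervalIntegral.integral_of_le hab, intervalIntegral.integral_of_le hab,
      MeasureTheory.integral_Ioc_eq_integral_Ioo, MeasureTheory.integral_Ioc_eq_integral_Ioo]
    apply MeasureTheory.setIntegral_mono_on
    · exact (hg_int.1).mono_set Set.Ioo_subset_Ioc_self
    · exact (hf_int.1).mono_set Set.Ioo_subset_Ioc_self
    · exact measurableSet_Ioo
    · intro x hx
      have hp := p_pos h a b ha0 hb0 ha hb x hx
      have hq : 0 < h + 1 + x + Real.exp x := by
        have := Real.exp_pos x; linarith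
      have hF : 0 < (h + 1 + x) ^ 2 - Real.exp (2 * x) := by
        rw [F_factor]; exact mul_pos hp hq
      have hup : h + 1 + x ≤ Real.exp (x + h) := by
        have := Real.add_one_le_exp (x + h); linarith
      have hup2 : (h + 1 + x) ^ 2 ≤ Real.exp (2 * x) * Real.exp (2 * h) := by
        have h0 : 0 ≤ h + 1 + x := by nlinarith [Real.exp_pos x]
        have := pow_le_pow_left₀ h0 hup 2
        calc (h + 1 + x) ^ 2 ≤ Real.exp (x + h) ^ 2 := this
        _ = Real.exp (2 * x) * Real.exp (2 * h) := by
            rw [← Real.exp_nat_mul, ← Real.exp_add]; ring_nf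
      have hFup : (h + 1 + x) ^ 2 - Real.exp (2 * x)
          ≤ Real.exp (2 * x) * (Real.exp (2 * h) - 1) := by nlinarith
      have hsqF : Real.sqrt ((h + 1 + x) ^ 2 - Real.exp (2 * x))
          ≤ Real.exp x * Real.sqrt (Real.exp (2 * h) - 1) := by
        calc Real.sqrt ((h + 1 + x) ^ 2 - Real.exp (2 * x))
            ≤ Real.sqrt (Real.exp (2 * x) * (Real.exp (2 * h) - 1)) := Real.sqrt_le_sqrt hFup
        _ = Real.exp x * Real.sqrt (Real.exp (2 * h) - 1) := by
            rw [Real.sqrt_mul (Real.exp_pos _).le]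
            congr 1
            rw [show (2:ℝ) * x = x + x by ring, Real.exp_add, Real.sqrt_mul_self (Real.exp_pos x).le]
      have hgx : g x = 1 / (Real.exp x * Real.sqrt (Real.exp (2 * h) - 1)) := by
        show Real.exp (-x) * (Real.sqrt (Real.exp (2 * h) - 1))⁻¹
            = 1 / (Real.exp x * Real.sqrt (Real.exp (2 * h) - 1))
        rw [Real.exp_neg]
        field_simp
      rw [hgx, hf]
      apply one_div_le_one_div_of_le (Real.sqrt_pos.2 hF) hsqF
  calc (Real.exp (-a) - Real.exp (-b)) / (Real.pi * Real.sqrt (Real.exp (2 * h) - 1))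
      = (1 / Real.pi) * ∫ x in a..b, g x := by
        rw [hgval]
        field_simp
        try ring
  _ ≤ (1 / Real.pi) * ∫ x in a..b, f x := by
        apply mul_le_mul_of_nonneg_left key
        positivity
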